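/- Let p be a prime not dividing the order of the Weyl group W of Φ. Then p is not a torsion prime for Φ: for every subset Ψ ⊆ Φ that is closed in Φ (i.e., (ℤ-span of Ψ) ∩ Φ = Ψ), setting Ψ̌ = {α̌ : α ∈ Ψ}, the quotient (ℤ-span of Φ̌)/(ℤ-span of Ψ̌) has no p-torsion; concretely, if v lies in the ℤ-span of Φ̌ and p·v lies in the ℤ-span of Ψ̌, then v lies in the ℤ-span of Ψ̌. -/

import Mathlib

/-!
Let `H` be the subgroup of the Weyl group generated by the reflections `s α`, `α ∈ Ψ`, acting
contragrediently on `V'` by the coreflections `u ↦ u - ⟨α, u⟩ α̌`. For `u ∈ ℤΦ̌` the pairings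
`⟨α, u⟩` are integers, so `H` acts trivially on `ℤΦ̌ / ℤΨ̌`. The averaging operator
`u ↦ ∑_{w ∈ H} w u` kills every `α̌` with `α ∈ Ψ` (as `s α` negates it), hence kills `ℤΨ̌`. For
`v ∈ ℤΦ̌` with `p v ∈ ℤΨ̌` the average of `v` is therefore `0`, so `|H| v = ∑_{w ∈ H} (v - w v)`
lies in `ℤΨ̌`; as `|H|` divides `|W|`, it is prime to `p`, and `v ∈ ℤΨ̌`.
-/

open Submodule

theorem exists_intCast_eq_of_mem_span {M : Type*} [AddCommGroup M] (f : M →+ ℚ) {X : Set M}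
    (hX : ∀ x ∈ X, ∃ n : ℤ, f x = n) {u : M} (hu : u ∈ span ℤ X) : ∃ n : ℤ, f u = n := by
  induction hu using Submodule.span_induction with
  | mem x hx => exact hX x hx
  | zero => exact ⟨0, by simp⟩
  | add x y _ _ hx hy =>
    obtain ⟨a, ha⟩ := hx
    obtain ⟨b, hb⟩ := hy
    exact ⟨a + b, by simp [ha, hb]⟩
  | smul c x _ hx =>
    obtain ⟨a, ha⟩ := hx
    exact ⟨c * a, by simp [ha]⟩

section Averaging

variable {G M : Type*} [Group G] [AddCommGroup M] [DistribMulAction G M]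

theorem sub_smul_mem_of_mem_closure {N L : Submodule ℤ M} (hNL : N ≤ L) {T : Set G}
    [Finite (Subgroup.closure T)] (hT : ∀ t ∈ T, ∀ u ∈ L, u - t • u ∈ N) {g : G}
    (hg : g ∈ Subgroup.closure T) : ∀ u ∈ L, u - g • u ∈ N := by
  -- generators of finite order: the inverses lie in the monoid closure
  have hfin : ∀ t ∈ T, IsOfFinOrder t := fun t ht =>
    (Subgroup.closure T).subtype.isOfFinOrder
      (isOfFinOrder_of_finite (⟨t, Subgroup.subset_closure ht⟩ : Subgroup.closure T))
  rw [← Subgroup.mem_toSubmonoid, Subgroup.closure_toSubmonoid_of_isOfFinOrder hfin] at hg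
  induction hg using Submonoid.closure_induction with
  | mem t ht => exact hT t ht
  | one => simp
  | mul g h _ _ hg hh =>
    intro u hu
    have hhu : h • u ∈ L := by simpa using L.sub_mem hu (hNL (hh u hu))
    rw [mul_smul, ← sub_add_sub_cancel u (h • u)]
    exact N.add_mem (hh u hu) (hg _ hhu)

variable [IsAddTorsionFree M]

theorem sum_smul_eq_zero_of_smul_eq_neg [Fintype G] {g : G} {x : M} (hx : g • x = -x) :
    ∑ h : G, h • x = 0 := by
  have hinv : ∑ h : G, h • x = ∑ h : G, h • g • x :=
    (Fintype.sum_equiv (Equiv.mulRight g) _ _ fun h => (mul_smul h g x).symm).symm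
  rw [hx] at hinv
  simp only [smul_neg, Finset.sum_neg_distrib, eq_neg_iff_add_eq_zero, ← two_zsmul] at hinv
  exact zsmul_right_injective two_ne_zero (hinv.trans (zsmul_zero 2).symm)

theorem sum_smul_eq_zero_of_mem_span [Fintype G] {X : Set M}
    (hX : ∀ x ∈ X, ∃ g : G, g • x = -x) {u : M} (hu : u ∈ span ℤ X) : ∑ h : G, h • u = 0 := by
  induction hu using Submodule.span_induction with
  | mem x hx =>
    obtain ⟨g, hg⟩ := hX x hx
    exact sum_smul_eq_zero_of_smul_eq_neg hg
  | zero => simp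
  | add x y _ _ hx hy => simp [smul_add, Finset.sum_add_distrib, hx, hy]
  | smul c x _ hx => simp [smul_comm _ c, ← Finset.smul_sum, hx]

theorem mem_of_zsmul_mem_of_isCoprime_card [Fintype G] {N L : Submodule ℤ M}
    (hL : ∀ g : G, ∀ u ∈ L, u - g • u ∈ N) (hN : ∀ u ∈ N, ∑ g : G, g • u = 0) {n : ℤ}
    (hn : n ≠ 0) (hcop : IsCoprime n (Fintype.card G)) {v : M} (hv : v ∈ L) (hnv : n • v ∈ N) :
    v ∈ N := by
  have havg : ∑ g : G, g • v = 0 := by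
    refine zsmul_right_injective hn ?_
    simpa [Finset.smul_sum, smul_comm n] using hN _ hnv
  have hcard : (Fintype.card G : ℤ) • v ∈ N := by
    have hsum := N.sum_mem fun g (_ : g ∈ Finset.univ) => hL g v hv
    simpa [Finset.sum_sub_distrib, havg] using hsum
  obtain ⟨a, b, hab⟩ := hcop
  have hv : v = a • n • v + b • (Fintype.card G : ℤ) • v := by
    rw [smul_smul, smul_smul, ← add_smul, hab, one_smul]
  rw [hv]
  exact N.add_mem (N.smul_mem a hnv) (N.smul_mem b hcard)

theorem mem_of_zsmul_mem_of_isCoprime_card_closure {X : Set M} {L : Submodule ℤ M}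
    (hXL : span ℤ X ≤ L) {T : Set G} [Finite (Subgroup.closure T)]
    (hT : ∀ t ∈ T, ∀ u ∈ L, u - t • u ∈ span ℤ X) (hX : ∀ x ∈ X, ∃ t ∈ T, t • x = -x) {n : ℤ}
    (hn : n ≠ 0) (hcop : IsCoprime n (Nat.card (Subgroup.closure T))) {v : M} (hv : v ∈ L)
    (hnv : n • v ∈ span ℤ X) : v ∈ span ℤ X := by
  have : Fintype (Subgroup.closure T) := Fintype.ofFinite _
  rw [Nat.card_eq_fintype_card] at hcop
  refine mem_of_zsmul_mem_of_isCoprime_card (G := Subgroup.closure T)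
    (fun g => sub_smul_mem_of_mem_closure hXL hT g.2)
    (fun u hu => sum_smul_eq_zero_of_mem_span (fun x hx => ?_) hu) hn hcop hv hnv
  obtain ⟨t, ht, htx⟩ := hX x hx
  exact ⟨⟨t, Subgroup.subset_closure ht⟩, htx⟩

end Averaging

namespace LinearMap

variable {R M N : Type*} [CommRing R] [AddCommGroup M] [Module R M] [AddCommGroup N] [Module R N]
  (B : M →ₗ[R] N →ₗ[R] R) [B.IsPerfPair]

noncomputable def contragredient : (M ≃ₗ[R] M) →* (N ≃ₗ[R] N) where
  toFun g := B.flip.toPerfPair ≪≫ₗ g.symm.dualMap ≪≫ₗ B.flip.toPerfPair.symm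
  map_one' := by ext; simp [LinearEquiv.one_eq_refl]
  map_mul' g h := by
    ext y
    refine B.flip.toPerfPair.injective (LinearMap.ext fun x => ?_)
    simp [LinearEquiv.dualMap_apply, LinearEquiv.mul_eq_trans]

theorem apply_contragredient (g : M ≃ₗ[R] M) (x : M) (y : N) :
    B x (B.contragredient g y) = B (g.symm x) y := by
  simp [contragredient, LinearEquiv.dualMap_apply]

theorem contragredient_reflection_apply {x : M} {y : N} (h : B.flip y x = 2) (u : N) :
    B.contragredient (Module.reflection h) u = u - B x u • y := by
  refine B.flip.toPerfPair.injective (LinearMap.ext fun z => ?_)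
  simp only [toPerfPair_apply, flip_apply]
  rw [apply_contragredient, Module.reflection_symm]
  simp [Module.reflection_apply, mul_comm]

theorem contragredient_reflection_apply_self {x : M} {y : N} (h : B.flip y x = 2) :
    B.contragredient (Module.reflection h) y = -y := by
  rw [contragredient_reflection_apply, ← flip_apply (f := B), h]
  module

theorem sub_contragredient_reflection_mem_span {M N : Type*} [AddCommGroup M] [Module ℚ M]
    [AddCommGroup N] [Module ℚ N] (B : M →ₗ[ℚ] N →ₗ[ℚ] ℚ) [B.IsPerfPair] {x : M} {y : N}
    (h : B.flip y x = 2) {X Y : Set N} (hX : ∀ z ∈ X, ∃ n : ℤ, B x z = n) (hy : y ∈ Y) {u : N}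
    (hu : u ∈ span ℤ X) : u - B.contragredient (Module.reflection h) u ∈ span ℤ Y := by
  obtain ⟨n, hn⟩ := exists_intCast_eq_of_mem_span (B x).toAddMonoidHom hX hu
  rw [contragredient_reflection_apply, sub_sub_cancel, ← toAddMonoidHom_coe, hn,
    Int.cast_smul_eq_zsmul]
  exact zsmul_mem (subset_span hy) n

end LinearMap

theorem not_torsion_prime_of_not_dvd_weyl_order_general
    {V V' : Type*} [AddCommGroup V] [Module ℚ V] [AddCommGroup V'] [Module ℚ V']
    (P : V →ₗ[ℚ] V' →ₗ[ℚ] ℚ) [P.IsPerfPair]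
    (Φ : Set V) (coroot : V → V')
    (h2 : ∀ α ∈ Φ, P α (coroot α) = 2)
    (hcrys : ∀ α ∈ Φ, ∀ β ∈ Φ, ∃ n : ℤ, P β (coroot α) = (n : ℚ))
    (s : V → (V ≃ₗ[ℚ] V))
    (hs_def : ∀ α ∈ Φ, ∀ v : V, s α v = v - (P v (coroot α)) • α)
    (p : ℕ) (hp : p.Prime)
    (hpW : ¬ p ∣ Nat.card ↥(Subgroup.closure (s '' Φ)))
    (Ψ : Set V) (hΨ : Ψ ⊆ Φ) :
    ∀ v ∈ Submodule.span ℤ (coroot '' Φ),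
      (p : ℤ) • v ∈ Submodule.span ℤ (coroot '' Ψ) → v ∈ Submodule.span ℤ (coroot '' Ψ) := by
  intro v hv hpv
  have : IsAddTorsionFree V' := .of_module_rat V'
  set ρ := P.contragredient
  have hrefl : ∀ α ∈ Ψ, P.flip (coroot α) α = 2 := fun α hα => h2 α (hΨ hα)
  have hs_eq : ∀ α (hα : α ∈ Ψ), s α = Module.reflection (hrefl α hα) := fun α hα =>
    LinearEquiv.ext fun x =>
      (hs_def α (hΨ hα) x).trans (Module.reflection_apply x (hrefl α hα)).symm
  have hpH : ¬ p ∣ Nat.card (Subgroup.closure (ρ '' (s '' Ψ))) := by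
    rw [← MonoidHom.map_closure]
    exact fun hd => hpW <| hd.trans <| (Subgroup.card_map_dvd _ _).trans <|
      Subgroup.card_dvd_of_le <| Subgroup.closure_mono <| Set.image_mono hΨ
  have : Finite (Subgroup.closure (ρ '' (s '' Ψ))) :=
    Nat.finite_of_card_ne_zero fun h0 => hpH (h0 ▸ dvd_zero p)
  refine mem_of_zsmul_mem_of_isCoprime_card_closure (span_mono (Set.image_mono hΨ)) ?_ ?_
    (by exact_mod_cast hp.ne_zero) (Nat.isCoprime_iff_coprime.mpr (hp.coprime_iff_not_dvd.mpr hpH))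
    hv hpv
  · rintro _ ⟨_, ⟨α, hα, rfl⟩, rfl⟩ u hu
    rw [LinearEquiv.smul_def, hs_eq α hα]
    exact P.sub_contragredient_reflection_mem_span _
      (by rintro _ ⟨β, hβ, rfl⟩; exact hcrys β hβ α (hΨ hα)) (Set.mem_image_of_mem coroot hα) hu
  · rintro _ ⟨α, hα, rfl⟩
    refine ⟨ρ (s α), Set.mem_image_of_mem ρ (Set.mem_image_of_mem s hα), ?_⟩
    rw [LinearEquiv.smul_def, hs_eq α hα]
    exact P.contragredient_reflection_apply_self _

/-- Let `Φ` be a finite, reduced, crystallographic root system with Weyl group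
`W = ⟨s α : α ∈ Φ⟩`, and let `p` be a prime not dividing `|W|`.  Then `p` is not a torsion prime
for `Φ`: for every subset `Ψ ⊆ Φ` that is closed in `Φ` (i.e. `ℤΨ ∩ Φ = Ψ`), with
`Ψ̌ = coroot '' Ψ`, the quotient `ℤΦ̌ / ℤΨ̌` has no `p`-torsion; concretely, if `v ∈ ℤΦ̌` and
`p • v ∈ ℤΨ̌`, then `v ∈ ℤΨ̌`. -/
theorem not_torsion_prime_of_not_dvd_weyl_order
    {V V' : Type*} [AddCommGroup V] [Module ℚ V] [AddCommGroup V'] [Module ℚ V']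
    [FiniteDimensional ℚ V] [FiniteDimensional ℚ V']
    (P : V →ₗ[ℚ] V' →ₗ[ℚ] ℚ) [P.IsPerfPair]
    (Φ : Set V) (hfin : Φ.Finite) (coroot : V → V')
    (h2 : ∀ α ∈ Φ, P α (coroot α) = 2)
    (hcrys : ∀ α ∈ Φ, ∀ β ∈ Φ, ∃ n : ℤ, P β (coroot α) = (n : ℚ))
    (hred : ∀ α ∈ Φ, ∀ c : ℚ, c • α ∈ Φ → c = 1 ∨ c = -1)
    (s : V → (V ≃ₗ[ℚ] V))
    (hs_def : ∀ α ∈ Φ, ∀ v : V, s α v = v - (P v (coroot α)) • α)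
    (hs_perm : ∀ α ∈ Φ, ∀ β ∈ Φ, s α β ∈ Φ)
    (p : ℕ) (hp : p.Prime)
    (hpW : ¬ p ∣ Nat.card ↥(Subgroup.closure (s '' Φ)))
    (Ψ : Set V) (hΨ : Ψ ⊆ Φ)
    (hclosed : (Submodule.span ℤ Ψ : Set V) ∩ Φ = Ψ) :
    ∀ v ∈ Submodule.span ℤ (coroot '' Φ),
      (p : ℤ) • v ∈ Submodule.span ℤ (coroot '' Ψ) → v ∈ Submodule.span ℤ (coroot '' Ψ) :=
  not_torsion_prime_of_not_dvd_weyl_order_general P Φ coroot h2 hcrys s hs_def p hp hpW Ψ hΨ
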